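/- arXiv:1810.09062 — 4 statements merged into one kernel-verified Lean document; each statement's English description precedes it below -/
import Mathlib

section
/- For any symmetric positive semidefinite n×n matrix A and 1 ≤ k ≤ n, the optimal value of the ℓ1-relaxation satisfies OPT_{ℓ1} ≤ ρ² · λ^k(A) where ρ = 1 + √(k/(k+1)). -/
open Matrix
open scoped Classical

/-!
For a positive semidefinite `A`, `x ↦ √(xᵀAx)` is a seminorm, and on `k`-sparse vectors it is
at most `√λ ‖x‖₂`, where `λ = λ^k(A)`. Write `x = y + w` with `y` the `k` largest entries of `x`.
Peeling off the `k` largest entries of `w` again and again and applying AM-GM to each block gives,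
by induction on the support, `√(wᵀAw) ≤ √λ (√k m / 2 + ‖w‖₁ / √k)` whenever every `|wᵢ| ≤ m`;
here `m = ‖y‖₁ / k`. Together with `‖y‖₂ ≤ min 1 ‖y‖₁` and `‖x‖₁ ≤ √k` this yields
`√(xᵀAx) ≤ (2 - 1 / (2√k)) √λ`, and `2 - 1 / (2√k) ≤ 1 + √(k / (k + 1))`.
-/

open Finset

theorem Finset.exists_subset_card_eq_forall_le {α β : Type*} [LinearOrder β] (g : α → β)
    {s : Finset α} {k : ℕ} (hk : k ≤ #s) :
    ∃ t ⊆ s, #t = k ∧ ∀ i ∈ t, ∀ j ∈ s \ t, g j ≤ g i := by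
  induction k with
  | zero => exact ⟨∅, empty_subset s, card_empty, by simp⟩
  | succ k ih =>
    obtain ⟨t, hts, htk, ht⟩ := ih (by omega)
    obtain ⟨j, hj, hjmax⟩ := (s \ t).exists_max_image g
      (by rw [← card_pos, card_sdiff_of_subset hts]; omega)
    obtain ⟨hjs, hjt⟩ := mem_sdiff.1 hj
    refine ⟨insert j t, insert_subset hjs hts, by rw [card_insert_of_notMem hjt, htk], ?_⟩
    intro i hi l hl
    rw [mem_sdiff, mem_insert, not_or] at hl
    have hl' : l ∈ s \ t := mem_sdiff.2 ⟨hl.1, hl.2.2⟩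
    rcases mem_insert.1 hi with rfl | hi
    · exact hjmax l hl'
    · exact ht i hi l hl'

section SparseDomination

variable {ι : Type*} [Fintype ι]

theorem exists_eq_add_head_tail (z : ι → ℝ) {k : ℕ} (hk0 : 0 < k) (hk : k ≤ #{i | z i ≠ 0}) :
    ∃ y w : ι → ℝ, z = y + w ∧ #{i | y i ≠ 0} ≤ k ∧ (∀ i, |y i| ≤ |z i|) ∧
      ∑ i, |y i| + ∑ i, |w i| = ∑ i, |z i| ∧ (∀ i, |w i| ≤ (∑ i, |y i|) / k) ∧
      #{i | w i ≠ 0} + k = #{i | z i ≠ 0} := by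
  obtain ⟨t, hts, htk, htop⟩ := exists_subset_card_eq_forall_le (fun i => |z i|) hk
  set y := (t : Set ι).indicator z
  set w := (t : Set ι)ᶜ.indicator z
  have hy (i) : y i = if i ∈ t then z i else 0 := Set.indicator_apply ..
  have hw (i) : w i = if i ∈ t then 0 else z i := by
    simp [w, Set.indicator_apply]
  have hsum_y : ∑ i, |y i| = ∑ i ∈ t, |z i| := by
    simp [hy, apply_ite, sum_ite_mem]
  refine ⟨y, w, (Set.indicator_self_add_compl _ _).symm, ?_, ?_, ?_, ?_, ?_⟩
  · exact htk ▸ card_le_card fun i hi => by by_contra h; simp [hy, h] at hi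
  · intro i; rw [hy]; split_ifs <;> simp
  · rw [← sum_add_distrib]
    refine sum_congr rfl fun i _ => ?_
    by_cases h : i ∈ t <;> simp [hy, hw, h]
  · intro i
    rw [le_div_iff₀ (by positivity), mul_comm, hsum_y, hw]
    split_ifs with hit
    · simpa using sum_nonneg fun i _ => abs_nonneg (z i)
    by_cases hzi : z i = 0
    · simpa [hzi] using sum_nonneg fun i _ => abs_nonneg (z i)
    calc (k : ℝ) * |z i| = ∑ _j ∈ t, |z i| := by simp [htk]
      _ ≤ ∑ j ∈ t, |z j| :=
        sum_le_sum fun j hj => htop j hj i (mem_sdiff.2 ⟨by simpa using hzi, hit⟩)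
  · have : ({i | w i ≠ 0} : Finset ι) = ({i | z i ≠ 0} : Finset ι) \ t := by
      ext i; by_cases h : i ∈ t <;> simp [hw, h]
    rw [this, card_sdiff_of_subset hts, htk]
    omega

theorem sum_sq_le_mul_sum_abs {z : ι → ℝ} {m : ℝ} (hm : ∀ i, |z i| ≤ m) :
    ∑ i, z i ^ 2 ≤ m * ∑ i, |z i| := by
  rw [mul_sum]
  refine sum_le_sum fun i _ => ?_
  rw [← sq_abs, sq]
  exact mul_le_mul_of_nonneg_right (hm i) (abs_nonneg _)

variable {f : (ι → ℝ) → ℝ} {c : ℝ} {k : ℕ}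

theorem apply_le_of_sparse_of_abs_le (hc : 0 ≤ c) (hk : 0 < k)
    (hsparse : ∀ x : ι → ℝ, #{i | x i ≠ 0} ≤ k → f x ≤ c * √(∑ i, x i ^ 2))
    {y : ι → ℝ} (hy : #{i | y i ≠ 0} ≤ k) {m : ℝ} (hm0 : 0 ≤ m) (hm : ∀ i, |y i| ≤ m) :
    f y ≤ c * ((√k * m + (∑ i, |y i|) / √k) / 2) := by
  have hsk : 0 < √(k : ℝ) := by positivity
  have hamgm : √(m * ∑ i, |y i|) ≤ (√k * m + (∑ i, |y i|) / √k) / 2 := by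
    have hprod : √k * m * ((∑ i, |y i|) / √k) = m * ∑ i, |y i| := by field_simp
    rw [Real.sqrt_le_iff]
    constructor
    · positivity
    · nlinarith [four_mul_le_sq_add (√k * m) ((∑ i, |y i|) / √k)]
  calc f y ≤ c * √(∑ i, y i ^ 2) := hsparse y hy
    _ ≤ c * √(m * ∑ i, |y i|) := by gcongr; exact sum_sq_le_mul_sum_abs hm
    _ ≤ _ := by gcongr

theorem apply_le_of_abs_le (hf : ∀ x y, f (x + y) ≤ f x + f y) (hc : 0 ≤ c) (hk : 0 < k)
    (hsparse : ∀ x : ι → ℝ, #{i | x i ≠ 0} ≤ k → f x ≤ c * √(∑ i, x i ^ 2))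
    (z : ι → ℝ) {m : ℝ} (hm0 : 0 ≤ m) (hm : ∀ i, |z i| ≤ m) :
    f z ≤ c * (√k * m / 2 + (∑ i, |z i|) / √k) := by
  induction hN : #{i | z i ≠ 0} using Nat.strong_induction_on generalizing z m with
  | _ N ih =>
  by_cases hsmall : N ≤ k
  · calc f z ≤ c * ((√k * m + (∑ i, |z i|) / √k) / 2) :=
          apply_le_of_sparse_of_abs_le hc hk hsparse (hN ▸ hsmall) hm0 hm
      _ ≤ c * (√k * m / 2 + (∑ i, |z i|) / √k) := by
          gcongr
          have : 0 ≤ (∑ i, |z i|) / √k := by positivity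
          linarith
  obtain ⟨y, w, rfl, hy, hyz, hsum, hw, hcard⟩ := exists_eq_add_head_tail z hk (by omega)
  set P := ∑ i, |y i|
  have hPk : √k * (P / k) = P / √k := by rw [mul_div_left_comm, Real.sqrt_div_self', mul_one_div]
  calc f (y + w) ≤ f y + f w := hf y w
    _ ≤ c * ((√k * m + P / √k) / 2) + c * (√k * (P / k) / 2 + (∑ i, |w i|) / √k) :=
        add_le_add (apply_le_of_sparse_of_abs_le hc hk hsparse hy hm0 fun i => (hyz i).trans (hm i))
          (ih _ (by omega) w (by positivity) hw rfl)
    _ = c * (√k * m / 2 + (∑ i, |(y + w) i|) / √k) := by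
        rw [hPk, ← hsum]; ring

theorem sqrt_sum_sq_le_sum_abs (z : ι → ℝ) : √(∑ i, z i ^ 2) ≤ ∑ i, |z i| := by
  have hz (i) : |z i| ≤ ∑ j, |z j| :=
    single_le_sum (f := fun j => |z j|) (fun j _ => abs_nonneg _) (mem_univ i)
  calc √(∑ i, z i ^ 2) ≤ √((∑ i, |z i|) * ∑ i, |z i|) :=
        Real.sqrt_le_sqrt (sum_sq_le_mul_sum_abs hz)
    _ = ∑ i, |z i| := Real.sqrt_mul_self (sum_nonneg fun i _ => abs_nonneg _)

theorem add_div_add_div_le_two_sub_inv {s t P W : ℝ} (hs : 1 ≤ s) (ht : t ≤ 1) (htP : t ≤ P)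
    (hPW : P + W ≤ s) : t + (P / s / 2 + W / s) ≤ 2 - 1 / (2 * s) := by
  have hdiff : t + (P / s / 2 + W / s) - (2 - 1 / (2 * s))
      = (2 * s * t + P + 2 * W - (4 * s - 1)) / (2 * s) := by
    field_simp; ring
  have : 2 * s * t + P + 2 * W - (4 * s - 1) ≤ 0 := by
    nlinarith [mul_nonneg (sub_nonneg.2 ht) (by linarith : (0 : ℝ) ≤ 2 * s - 1)]
  linarith [div_nonpos_of_nonpos_of_nonneg this (by linarith : (0 : ℝ) ≤ 2 * s)]

theorem apply_le_of_sqrt_sum_sq_le_one_of_sum_abs_le (hf : ∀ x y, f (x + y) ≤ f x + f y)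
    (hc : 0 ≤ c) (hk : 0 < k)
    (hsparse : ∀ x : ι → ℝ, #{i | x i ≠ 0} ≤ k → f x ≤ c * √(∑ i, x i ^ 2))
    {x : ι → ℝ} (hx2 : √(∑ i, x i ^ 2) ≤ 1) (hx1 : ∑ i, |x i| ≤ √k) :
    f x ≤ c * (2 - 1 / (2 * √k)) := by
  have hsk : 1 ≤ √(k : ℝ) := Real.one_le_sqrt.2 (by exact_mod_cast hk)
  by_cases hsmall : #{i | x i ≠ 0} ≤ k
  · calc f x ≤ c * √(∑ i, x i ^ 2) := hsparse x hsmall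
      _ ≤ c * (2 - 1 / (2 * √k)) := by
          gcongr
          have : 1 / (2 * √(k : ℝ)) ≤ 1 := by rw [div_le_one (by positivity)]; linarith
          linarith
  obtain ⟨y, w, rfl, hy, hyx, hsum, hw, -⟩ := exists_eq_add_head_tail x hk (by omega)
  set P := ∑ i, |y i|
  have hy2 : √(∑ i, y i ^ 2) ≤ 1 :=
    le_trans (Real.sqrt_le_sqrt (sum_le_sum fun i _ => sq_le_sq.2 (by simpa using hyx i))) hx2
  calc f (y + w) ≤ f y + f w := hf y w
    _ ≤ c * √(∑ i, y i ^ 2) + c * (√k * (P / k) / 2 + (∑ i, |w i|) / √k) :=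
        add_le_add (hsparse y hy) (apply_le_of_abs_le hf hc hk hsparse w (by positivity) hw)
    _ ≤ c * (2 - 1 / (2 * √k)) := by
        rw [← mul_add, mul_div_left_comm, Real.sqrt_div_self', mul_one_div]
        gcongr
        exact add_div_add_div_le_two_sub_inv hsk hy2 (sqrt_sum_sq_le_sum_abs y)
          (hsum.trans_le hx1)

end SparseDomination

theorem two_sub_inv_le_one_add_sqrt {x : ℝ} (hx : 1 ≤ x) :
    2 - 1 / (2 * √x) ≤ 1 + √(x / (x + 1)) := by
  have hs : 1 ≤ √x := Real.one_le_sqrt.2 hx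
  have hsq : √x ^ 2 = x := Real.sq_sqrt (by linarith)
  set s := √x
  suffices (1 - 1 / (2 * s)) ^ 2 ≤ x / (x + 1) by linarith [Real.le_sqrt_of_sq_le this]
  rw [← hsq, one_sub_div (by positivity), div_pow, div_le_div_iff₀ (by positivity) (by positivity)]
  nlinarith [mul_nonneg (sub_nonneg.2 hs) (sq_nonneg s), sq_nonneg (s - 1)]

section QuadraticForm

variable {ι : Type*} [Fintype ι] {A : Matrix ι ι ℝ}

theorem sqrt_dotProduct_mulVec_add_le (hA : A.PosSemidef) (x y : ι → ℝ) :
    √((x + y) ⬝ᵥ A *ᵥ (x + y)) ≤ √(x ⬝ᵥ A *ᵥ x) + √(y ⬝ᵥ A *ᵥ y) := by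
  let inst := A.toSeminormedAddCommGroup hA
  have hnorm (v : ι → ℝ) : @norm _ inst.toNorm v = √(v ⬝ᵥ A *ᵥ v) := by
    show √(RCLike.re ((A *ᵥ v) ⬝ᵥ star v)) = _
    simp [dotProduct_comm]
  simpa only [hnorm] using @norm_add_le _ inst.toSeminormedAddGroup x y

theorem bddAbove_dotProduct_mulVec_of_sqrt_sum_sq_eq_one (A : Matrix ι ι ℝ)
    (p : (ι → ℝ) → Prop) :
    BddAbove {val : ℝ | ∃ x : ι → ℝ, √(∑ i, x i ^ 2) = 1 ∧ p x ∧ val = x ⬝ᵥ A *ᵥ x} := by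
  obtain ⟨C, hC⟩ := (isCompact_closedBall (0 : ι → ℝ) 1).bddAbove_image
    (f := fun x => x ⬝ᵥ A *ᵥ x) (by fun_prop)
  refine ⟨C, ?_⟩
  rintro _ ⟨x, hx, -, rfl⟩
  refine hC ⟨x, ?_, rfl⟩
  rw [mem_closedBall_zero_iff, pi_norm_le_iff_of_nonneg zero_le_one]
  intro i
  rw [Real.norm_eq_abs, ← sq_le_one_iff_abs_le_one]
  rw [Real.sqrt_eq_one] at hx
  exact hx ▸ single_le_sum (f := fun j => x j ^ 2) (fun j _ => sq_nonneg _) (mem_univ i)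

theorem dotProduct_mulVec_le_sSup_mul {k : ℕ} {w : ι → ℝ} (hw : #{i | w i ≠ 0} ≤ k) :
    w ⬝ᵥ A *ᵥ w ≤ sSup {val : ℝ | ∃ x : ι → ℝ, √(∑ i, x i ^ 2) = 1 ∧ #{i | x i ≠ 0} ≤ k ∧
      val = x ⬝ᵥ A *ᵥ x} * ∑ i, w i ^ 2 := by
  by_cases hw0 : w = 0
  · simp [hw0]
  obtain ⟨j, hj⟩ := Function.ne_iff.1 hw0
  have hpos : 0 < ∑ i, w i ^ 2 :=
    sum_pos' (fun i _ => sq_nonneg _) ⟨j, mem_univ j, sq_pos_of_ne_zero hj⟩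
  set r := √(∑ i, w i ^ 2)
  have hr : 0 < r := Real.sqrt_pos.2 hpos
  have hr2 : r ^ 2 = ∑ i, w i ^ 2 := Real.sq_sqrt hpos.le
  have hunit : √(∑ i, (r⁻¹ • w) i ^ 2) = 1 := by
    simp_rw [Pi.smul_apply, smul_eq_mul, mul_pow, ← mul_sum, ← hr2]
    field_simp
    simp
  have hle := le_csSup (bddAbove_dotProduct_mulVec_of_sqrt_sum_sq_eq_one A
    fun x => #{i | x i ≠ 0} ≤ k)
    ⟨r⁻¹ • w, hunit, by simpa [hr.ne'] using hw, rfl⟩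
  rw [smul_dotProduct, mulVec_smul, dotProduct_smul, smul_eq_mul, smul_eq_mul,
    ← mul_assoc, ← sq, inv_pow, inv_mul_le_iff₀ (by positivity)] at hle
  rwa [← hr2, mul_comm]

end QuadraticForm

theorem stmt2_general (n k : ℕ) (hk1 : 1 ≤ k)
    (A : Matrix (Fin n) (Fin n) ℝ) (hpsd : A.PosSemidef) :
    sSup {val : ℝ | ∃ x : Fin n → ℝ, Real.sqrt (∑ i, x i ^ 2) ≤ 1 ∧
        (∑ i, |x i|) ≤ Real.sqrt k ∧ val = x ⬝ᵥ A.mulVec x} ≤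
    (1 + Real.sqrt ((k : ℝ) / (k + 1))) ^ 2 *
      sSup {val : ℝ | ∃ x : Fin n → ℝ, Real.sqrt (∑ i, x i ^ 2) = 1 ∧
        (Finset.univ.filter fun i => x i ≠ 0).card ≤ k ∧ val = x ⬝ᵥ A.mulVec x} := by
  set lam := sSup {val : ℝ | ∃ x : Fin n → ℝ, Real.sqrt (∑ i, x i ^ 2) = 1 ∧
        (Finset.univ.filter fun i => x i ≠ 0).card ≤ k ∧ val = x ⬝ᵥ A.mulVec x}
  have hquad_nonneg (x : Fin n → ℝ) : 0 ≤ x ⬝ᵥ A *ᵥ x := by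
    simpa using hpsd.dotProduct_mulVec_nonneg x
  have hlam : 0 ≤ lam := Real.sSup_nonneg (by rintro _ ⟨x, -, -, rfl⟩; exact hquad_nonneg x)
  refine csSup_le ⟨0, 0, by simp, by simp, by simp⟩ ?_
  rintro _ ⟨x, hx2, hx1, rfl⟩
  have hsqrt : √(x ⬝ᵥ A *ᵥ x) ≤ √lam * (2 - 1 / (2 * √k)) :=
    apply_le_of_sqrt_sum_sq_le_one_of_sum_abs_le (f := fun x => √(x ⬝ᵥ A *ᵥ x))
      (sqrt_dotProduct_mulVec_add_le hpsd) (Real.sqrt_nonneg _) hk1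
      (fun w hw => by
        rw [← Real.sqrt_mul' _ (sum_nonneg fun i _ => sq_nonneg (w i))]
        exact Real.sqrt_le_sqrt (dotProduct_mulVec_le_sSup_mul hw)) hx2 hx1
  calc x ⬝ᵥ A *ᵥ x = √(x ⬝ᵥ A *ᵥ x) ^ 2 := (Real.sq_sqrt (hquad_nonneg x)).symm
    _ ≤ (√lam * (1 + √(k / (k + 1)))) ^ 2 := by
        gcongr
        exact hsqrt.trans (by gcongr; exact two_sub_inv_le_one_add_sqrt (by exact_mod_cast hk1))
    _ = _ := by rw [mul_pow, Real.sq_sqrt hlam, mul_comm]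

theorem stmt2 (n k : ℕ) (hk1 : 1 ≤ k) (hkn : k ≤ n)
    (A : Matrix (Fin n) (Fin n) ℝ) (hsymm : A.IsSymm) (hpsd : A.PosSemidef) :
    sSup {val : ℝ | ∃ x : Fin n → ℝ, Real.sqrt (∑ i, x i ^ 2) ≤ 1 ∧
        (∑ i, |x i|) ≤ Real.sqrt k ∧ val = x ⬝ᵥ A.mulVec x} ≤
    (1 + Real.sqrt ((k : ℝ) / (k + 1))) ^ 2 *
      sSup {val : ℝ | ∃ x : Fin n → ℝ, Real.sqrt (∑ i, x i ^ 2) = 1 ∧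
        (Finset.univ.filter fun i => x i ≠ 0).card ≤ k ∧ val = x ⬝ᵥ A.mulVec x} :=
  stmt2_general n k hk1 A hpsd
end

section
/- The set T_k = {x ∈ R^n : ||x||_2 ≤ 1, ||x||_1 ≤ √k} is contained in ρ · conv(S_k), where S_k = {x ∈ R^n : ||x||_2 ≤ 1, ||x||_0 ≤ k} and ρ = 1 + √(k/(k+1)). -/
/-!
Split `x` into the vector `y` of its `k` largest coordinates and the tail `z`. The head `y` is
`k`-sparse, so it lies in `‖y‖₂ • conv S_k`. With `μ` the largest tail entry and
`t = max μ (‖z‖₁ / k)`, the tail satisfies `‖z‖_∞ ≤ t` and `‖z‖₁ ≤ k t`; such vectors lie in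
`t • conv {u | ‖u‖_∞ ≤ 1, ‖u‖₀ ≤ k}` (integrality of the hypersimplex, by pipage rounding), hence in
`√k t • conv S_k`. What remains is the scalar inequality `‖y‖₂ + √k t ≤ 1 + √(k / (k + 1))`, which
follows from `‖y‖₂² ≤ ‖y‖₁`, `k μ ≤ ‖y‖₁`, `μ ≤ ‖z‖₁` and `‖y‖₁ + ‖z‖₁ ≤ √k`.
-/

open scoped Classical Pointwise
open Finset

section

variable {ι : Type*} [Fintype ι]

def sparseBall (ι : Type*) [Fintype ι] (k : ℕ) : Set (ι → ℝ) :=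
  {x | √(∑ i, x i ^ 2) ≤ 1 ∧ #{i | x i ≠ 0} ≤ k}

def sparseCube (ι : Type*) [Fintype ι] (k : ℕ) : Set (ι → ℝ) :=
  {x | (∀ i, |x i| ≤ 1) ∧ #{i | x i ≠ 0} ≤ k}

theorem exists_finset_card_eq_forall_notMem_le {α : Type*} [AddCommMonoid α] [LinearOrder α]
    [IsOrderedCancelAddMonoid α] (f : ι → α) {k : ℕ} (hk : k ≤ Fintype.card ι) :
    ∃ A : Finset ι, #A = k ∧ ∀ i ∉ A, ∀ j ∈ A, f i ≤ f j := by
  have hne : (powersetCard k (univ : Finset ι)).Nonempty := powersetCard_nonempty.2 (by simpa)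
  obtain ⟨A, hAk, hAmax⟩ := exists_max_image _ (fun B => ∑ i ∈ B, f i) hne
  rw [mem_powersetCard] at hAk
  refine ⟨A, hAk.2, fun i hi j hj => le_of_not_gt fun hlt => ?_⟩
  have hiA : i ∉ A.erase j := fun h => hi (mem_of_mem_erase h)
  have hB : insert i (A.erase j) ∈ powersetCard k univ := by
    rw [mem_powersetCard, card_insert_of_notMem hiA, card_erase_of_mem hj, ← hAk.2,
      Nat.sub_add_cancel (card_pos.2 ⟨j, hj⟩)]
    exact ⟨subset_univ _, rfl⟩
  have := hAmax _ hB
  rw [sum_insert hiA, ← add_sum_erase A f hj] at this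
  exact (add_lt_add_left hlt _).not_ge this

theorem Convex.mem_of_add_smul_mem_of_sub_smul_mem {𝕜 E : Type*} [Field 𝕜] [LinearOrder 𝕜]
    [IsStrictOrderedRing 𝕜] [AddCommGroup E] [Module 𝕜 E] {s : Set E} (hs : Convex 𝕜 s)
    {x d : E} {a b : 𝕜} (ha : 0 < a) (hb : 0 < b) (h₁ : x + a • d ∈ s) (h₂ : x - b • d ∈ s) :
    x ∈ s := by
  convert hs h₁ h₂ (div_pos hb (add_pos ha hb)).le (div_pos ha (add_pos ha hb)).le
    (by field_simp; ring) using 1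
  match_scalars <;> field_simp <;> ring

section Pipage

variable {w : ι → ℝ}

theorem one_lt_card_fractional {m : ℕ} (hw : ∀ i, w i ∈ Set.Icc (0 : ℝ) 1)
    (hsum : ∑ i, w i ≤ m) (hm : m < #{i | w i ≠ 0}) : 1 < #{i | w i ∈ Set.Ioo (0 : ℝ) 1} := by
  set F : Finset ι := {i | w i ∈ Set.Ioo 0 1}
  set P : Finset ι := {i | w i ≠ 0}
  by_contra! hF
  have hFP : F ⊆ P := fun i hi => by
    simp only [F, P, mem_filter, Set.mem_Ioo] at hi ⊢
    exact ⟨hi.1, hi.2.1.ne'⟩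
  -- the deficit `#P - ∑ w` is carried by the fractional coordinates, each contributing `< 1`
  have hgap : ∑ i ∈ F, (1 - w i) = ∑ i ∈ P, (1 - w i) := by
    refine sum_subset hFP fun i hiP hiF => ?_
    simp only [F, P, mem_filter, mem_univ, true_and, Set.mem_Ioo, not_and_or, not_lt] at hiP hiF
    rcases hiF with h | h <;> linarith [(hw i).1, (hw i).2, lt_of_le_of_ne (hw i).1 (Ne.symm hiP)]
  have hlt : ∑ i ∈ F, (1 - w i) < 1 := by
    rcases F.eq_empty_or_nonempty with h | h
    · simp [h]
    · calc ∑ i ∈ F, (1 - w i) < ∑ i ∈ F, 1 :=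
            sum_lt_sum_of_nonempty h fun i hi => by
              simp only [F, mem_filter] at hi
              linarith [hi.2.1]
        _ ≤ 1 := by simpa using hF
  have hPw : ∑ i ∈ P, w i ≤ m := (sum_le_sum_of_subset_of_nonneg (subset_univ P)
    fun i _ _ => (hw i).1).trans hsum
  have hmP : (m : ℝ) + 1 ≤ #P := by exact_mod_cast hm
  rw [hgap, sum_sub_distrib, sum_const, nsmul_one] at hlt
  linarith

theorem exists_pipage_step (hw : ∀ r, w r ∈ Set.Icc (0 : ℝ) 1) {i j : ι} (hij : i ≠ j)
    (hi : w i ∈ Set.Ioo (0 : ℝ) 1) (hj : w j ∈ Set.Ioo (0 : ℝ) 1) :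
    ∃ t : ℝ, 0 < t ∧ ∀ v, v = w + t • (Pi.single i 1 - Pi.single j 1) →
      (∀ r, v r ∈ Set.Icc (0 : ℝ) 1) ∧ ∑ r, v r = ∑ r, w r ∧
        #{r | v r ∈ Set.Ioo (0 : ℝ) 1} < #{r | w r ∈ Set.Ioo (0 : ℝ) 1} := by
  obtain ⟨hi₀, hi₁⟩ := hi
  obtain ⟨hj₀, hj₁⟩ := hj
  -- the largest shift keeping both coordinates in `[0, 1]`: one of them leaves `(0, 1)`
  set t := min (1 - w i) (w j)
  have ht₁ : t ≤ 1 - w i := min_le_left _ _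
  have ht₂ : t ≤ w j := min_le_right _ _
  have ht₀ : 0 < t := lt_min (by linarith) hj₀
  refine ⟨t, ht₀, fun v hv => ?_⟩
  have hvi : v i = w i + t := by simp [hv, hij]
  have hvj : v j = w j - t := by simp [hv, hij.symm, sub_eq_add_neg]
  have hvr : ∀ r, r ≠ i → r ≠ j → v r = w r := fun r hri hrj => by simp [hv, hri, hrj]
  refine ⟨fun r => ?_, ?_, ?_⟩
  · by_cases hri : r = i
    · subst hri; rw [hvi]; constructor <;> linarith
    by_cases hrj : r = j
    · subst hrj; rw [hvj]; constructor <;> linarith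
    rw [hvr r hri hrj]; exact hw r
  · simp [hv, sum_add_distrib, ← mul_sum]
  · refine card_lt_card ((ssubset_iff_of_subset fun r hr => ?_).2 ?_)
    · simp only [mem_filter, mem_univ, true_and] at hr ⊢
      by_cases hri : r = i
      · subst hri; exact ⟨hi₀, hi₁⟩
      by_cases hrj : r = j
      · subst hrj; exact ⟨hj₀, hj₁⟩
      rwa [← hvr r hri hrj]
    · rcases min_cases (1 - w i) (w j) with ⟨h, -⟩ | ⟨h, -⟩
      · exact ⟨i, by simp [hi₀, hi₁], by simp [hvi, t, h]⟩
      · exact ⟨j, by simp [hj₀, hj₁], by simp [hvj, t, h]⟩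

theorem mem_convexHull_sparseCube_of_mem_Icc {m : ℕ} (hw : ∀ i, w i ∈ Set.Icc (0 : ℝ) 1)
    (hsum : ∑ i, w i ≤ m) : w ∈ convexHull ℝ (sparseCube ι m) := by
  induction hd : #{i | w i ∈ Set.Ioo (0 : ℝ) 1} using Nat.strong_induction_on generalizing w
    with | _ d ih =>
  by_cases hsupp : #{i | w i ≠ 0} ≤ m
  · exact subset_convexHull ℝ _ ⟨fun i => abs_le.2 ⟨by linarith [(hw i).1], (hw i).2⟩, hsupp⟩
  obtain ⟨i, j, hi, hj, hij⟩ :=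
    one_lt_card_iff.1 (one_lt_card_fractional hw hsum (not_le.1 hsupp))
  simp only [mem_filter, mem_univ, true_and] at hi hj
  obtain ⟨a, ha, hva⟩ := exists_pipage_step hw hij hi hj
  obtain ⟨b, hb, hvb⟩ := exists_pipage_step hw hij.symm hj hi
  have hmem : ∀ v : ι → ℝ, (∀ r, v r ∈ Set.Icc (0 : ℝ) 1) → ∑ r, v r = ∑ r, w r →
      #{r | v r ∈ Set.Ioo (0 : ℝ) 1} < d → v ∈ convexHull ℝ (sparseCube ι m) :=
    fun v hv hvsum hvd => ih _ hvd hv (hvsum ▸ hsum) rfl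
  refine (convex_convexHull ℝ _).mem_of_add_smul_mem_of_sub_smul_mem ha hb
    (d := Pi.single i 1 - Pi.single j 1) ?_ ?_
  · obtain ⟨h₁, h₂, h₃⟩ := hva _ rfl
    exact hmem _ h₁ h₂ (hd ▸ h₃)
  · obtain ⟨h₁, h₂, h₃⟩ := hvb _ rfl
    rw [← neg_sub, smul_neg, ← sub_eq_add_neg] at h₁ h₂ h₃
    exact hmem _ h₁ h₂ (hd ▸ h₃)

end Pipage

section SparseBall

variable {k : ℕ}

theorem sqrt_sum_sq_smul (c : ℝ) (u : ι → ℝ) :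
    √(∑ i, (c • u) i ^ 2) = |c| * √(∑ i, u i ^ 2) := by
  simp only [Pi.smul_apply, smul_eq_mul, mul_pow, ← mul_sum]
  rw [Real.sqrt_mul (sq_nonneg c), Real.sqrt_sq_eq_abs]

theorem card_support_le_of_imp {u v : ι → ℝ} (h : ∀ i, u i = 0 → v i = 0) :
    #{i | v i ≠ 0} ≤ #{i | u i ≠ 0} :=
  card_le_card fun i => by simpa using mt (h i)

theorem zero_mem_sparseBall : (0 : ι → ℝ) ∈ sparseBall ι k := by
  simp [sparseBall]

theorem balanced_sparseBall : Balanced ℝ (sparseBall ι k) := by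
  refine balanced_iff_smul_mem.2 fun a ha u ⟨hu₂, hu₀⟩ => ⟨?_, ?_⟩
  · rw [sqrt_sum_sq_smul]
    exact mul_le_one₀ ha (Real.sqrt_nonneg _) hu₂
  · exact (card_support_le_of_imp fun i hi => by simp [hi]).trans hu₀

theorem mem_smul_sparseBall {u : ι → ℝ} {r : ℝ} (hr : √(∑ i, u i ^ 2) ≤ r)
    (hu : #{i | u i ≠ 0} ≤ k) : u ∈ r • sparseBall ι k := by
  rcases eq_or_ne u 0 with rfl | hu₀
  · exact Set.zero_mem_smul_set zero_mem_sparseBall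
  have hpos : 0 < √(∑ i, u i ^ 2) := by
    obtain ⟨i, hi⟩ := Function.ne_iff.1 hu₀
    exact Real.sqrt_pos.2 ((pow_pos (abs_pos.2 hi) 2).trans_le
      (by simpa using single_le_sum (fun j _ => sq_nonneg (u j)) (mem_univ i)))
  have hr₀ : 0 < r := hpos.trans_le hr
  refine (Set.mem_smul_set_iff_inv_smul_mem₀ hr₀.ne' _ _).2 ⟨?_, ?_⟩
  · rw [sqrt_sum_sq_smul, abs_inv, abs_of_pos hr₀, inv_mul_le_iff₀ hr₀, mul_one]
    exact hr
  · exact (card_support_le_of_imp fun i hi => by simp [hi]).trans hu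

theorem sparseCube_subset_smul_sparseBall : sparseCube ι k ⊆ √k • sparseBall ι k := by
  rintro u ⟨hu₁, hu₀⟩
  refine mem_smul_sparseBall (Real.sqrt_le_sqrt ?_) hu₀
  calc ∑ i, u i ^ 2 = ∑ i ∈ {i | u i ≠ 0}, u i ^ 2 := by
        refine (sum_subset (subset_univ _) fun i _ hi => ?_).symm
        simp_all
    _ ≤ ∑ i ∈ {i | u i ≠ 0}, 1 :=
        sum_le_sum fun i _ => (sq_le_one_iff_abs_le_one _).2 (hu₁ i)
    _ ≤ k := by simpa using hu₀

theorem mul_mem_convexHull_sparseCube {σ u : ι → ℝ} (hσ : ∀ i, |σ i| ≤ 1)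
    (hu : u ∈ convexHull ℝ (sparseCube ι k)) : σ * u ∈ convexHull ℝ (sparseCube ι k) := by
  have hmaps : LinearMap.mulLeft ℝ σ '' sparseCube ι k ⊆ sparseCube ι k := by
    rintro - ⟨v, ⟨hv₁, hv₀⟩, rfl⟩
    refine ⟨fun i => ?_, (card_support_le_of_imp fun i hi => by simp [hi]).trans hv₀⟩
    simpa [abs_mul] using mul_le_one₀ (hσ i) (abs_nonneg _) (hv₁ i)
  have := (LinearMap.mulLeft ℝ σ).image_convexHull (sparseCube ι k) ▸ Set.mem_image_of_mem _ hu
  exact convexHull_mono hmaps this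

end SparseBall

theorem mem_smul_convexHull_sparseBall_of_abs_le {k : ℕ} {z : ι → ℝ} {t : ℝ}
    (hz : ∀ i, |z i| ≤ t) (hsum : ∑ i, |z i| ≤ k * t) :
    z ∈ (√k * t) • convexHull ℝ (sparseBall ι k) := by
  rcases le_or_gt t 0 with ht | ht
  · obtain rfl : z = 0 := funext fun i => abs_nonpos_iff.1 ((hz i).trans ht)
    exact Set.zero_mem_smul_set (subset_convexHull ℝ _ zero_mem_sparseBall)
  have hw : (fun i => |z i| / t) ∈ convexHull ℝ (sparseCube ι k) :=
    mem_convexHull_sparseCube_of_mem_Icc (fun i => ⟨by positivity, (div_le_one ht).2 (hz i)⟩)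
      (by rw [← sum_div, div_le_iff₀ ht]; exact hsum)
  have hσ : (fun i => (SignType.sign (z i) : ℝ)) * (fun i => |z i| / t) = t⁻¹ • z := by
    ext i
    simp only [Pi.mul_apply, Pi.smul_apply, smul_eq_mul, div_eq_inv_mul, mul_left_comm _ t⁻¹,
      sign_mul_abs]
  have := hσ ▸ mul_mem_convexHull_sparseCube (fun i => by cases SignType.sign (z i) <;> simp) hw
  rw [mul_comm, mul_smul, Set.mem_smul_set_iff_inv_smul_mem₀ ht.ne', ← convexHull_smul]
  exact convexHull_mono sparseCube_subset_smul_sparseBall this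

theorem sub_div_sqrt_le_sqrt_div {K b ℓ : ℝ} (hK : 1 ≤ K) (hb₁ : b ≤ 1) (hbℓ : b ^ 2 ≤ ℓ) :
    b - ℓ / √K ≤ √(K / (K + 1)) := by
  set s := √(K / (K + 1))
  have hs₀ : 0 ≤ s := Real.sqrt_nonneg _
  have hs : s ^ 2 * (K + 1) = K := by
    rw [Real.sq_sqrt (by positivity), div_mul_cancel₀ _ (by positivity)]
  have hq : 0 < √K := Real.sqrt_pos.2 (by linarith)
  have hqK : √K ≤ K := by nlinarith [Real.mul_self_sqrt (show 0 ≤ K by linarith)]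
  rcases le_or_gt b s with hbs | hsb
  · linarith [div_nonneg ((sq_nonneg b).trans hbℓ) hq.le]
  -- `(1 - s) (1 + s) (K + 1) = 1` and `√K ≤ K`
  have key : √K * (1 - s) ≤ s ^ 2 := by
    have h : (s ^ 2 - √K * (1 - s)) * ((1 + s) * (K + 1)) = K * (1 + s) - √K := by
      linear_combination (1 + s + √K) * hs
    nlinarith [mul_pos (by linarith : 0 < 1 + s) (by linarith : (0 : ℝ) < K + 1)]
  calc b - ℓ / √K ≤ 1 - s ^ 2 / √K := by
        gcongr
        nlinarith
    _ ≤ s := by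
        rw [sub_le_comm, le_div_iff₀ hq]
        linarith

theorem add_sqrt_mul_max_le {K b μ ℓ L : ℝ} (hK : 1 ≤ K) (hb₁ : b ≤ 1) (hbℓ : b ^ 2 ≤ ℓ)
    (hμℓ : K * μ ≤ ℓ) (hμL : μ ≤ L) (hℓL : ℓ + L ≤ √K) :
    b + √K * max μ (L / K) ≤ 1 + √(K / (K + 1)) := by
  have hq : 0 < √K := Real.sqrt_pos.2 (by linarith)
  have hqq : √K * √K = K := Real.mul_self_sqrt (by linarith)
  rw [mul_max_of_nonneg _ _ hq.le, ← max_add_add_left]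
  refine max_le ?_ ?_
  · have h₁ : √K * μ ≤ K / (K + 1) := by
      rw [le_div_iff₀ (by linarith)]
      nlinarith
    have h₂ : K / (K + 1) ≤ √(K / (K + 1)) := by
      rw [Real.le_sqrt (by positivity) (by positivity)]
      exact pow_le_of_le_one (by positivity) ((div_le_one (by linarith)).2 (by linarith))
        two_ne_zero
    linarith
  · have : √K * (L / K) ≤ 1 - ℓ / √K := by
      have e : √K * (L / K) = L / √K := by
        rw [eq_div_iff hq.ne', mul_right_comm, hqq, mul_div_cancel₀ _ (by linarith)]
      rw [e, le_sub_iff_add_le, ← add_div, div_le_one hq]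
      linarith
    linarith [sub_div_sqrt_le_sqrt_div hK hb₁ hbℓ]

theorem exists_head_tail_decomposition (x : ι → ℝ) {k : ℕ} (hk : 1 ≤ k)
    (hkι : k ≤ Fintype.card ι) :
    ∃ y z : ι → ℝ, ∃ μ : ℝ, x = y + z ∧ #{i | y i ≠ 0} ≤ k ∧ (∀ i, |y i| ≤ |x i|) ∧
      (∀ i, |z i| ≤ μ) ∧ k * μ ≤ ∑ i, |y i| ∧ μ ≤ ∑ i, |z i| ∧
      ∑ i, |y i| + ∑ i, |z i| = ∑ i, |x i| := by
  obtain ⟨A, hA, htop⟩ := exists_finset_card_eq_forall_notMem_le (fun i => |x i|) hkι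
  set y := A.piecewise x 0
  set z := A.piecewise (0 : ι → ℝ) x
  obtain ⟨i₁, -, hi₁⟩ := exists_max_image univ (fun i => |z i|)
    (univ_nonempty_iff.2 (Fintype.card_pos_iff.1 (by omega)))
  have hμA : ∀ j ∈ A, |z i₁| ≤ |x j| := fun j hj => by
    by_cases h : i₁ ∈ A
    · simp [z, h]
    · simpa [z, h] using htop i₁ h j hj
  refine ⟨y, z, |z i₁|, ?_, ?_, fun i => ?_, fun i => hi₁ i (mem_univ i), ?_,
    single_le_sum (f := fun i => |z i|) (fun i _ => abs_nonneg _) (mem_univ i₁), ?_⟩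
  · ext i; by_cases hi : i ∈ A <;> simp [y, z, hi]
  · exact (card_le_card fun i hi => by by_contra h; simp [y, h] at hi).trans hA.le
  · by_cases hi : i ∈ A <;> simp [y, hi]
  · calc (k : ℝ) * |z i₁| = ∑ i, if i ∈ A then |z i₁| else 0 := by simp [sum_ite_mem, hA]
      _ ≤ ∑ i, |y i| := sum_le_sum fun i _ => by
          by_cases hi : i ∈ A
          · simpa [y, hi] using hμA i hi
          · simp [y, hi]
  · rw [← sum_add_distrib]
    exact sum_congr rfl fun i _ => by by_cases hi : i ∈ A <;> simp [y, z, hi]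

theorem mem_smul_convexHull_sparseBall {k : ℕ} (hk : 1 ≤ k) (hkι : k ≤ Fintype.card ι)
    {x : ι → ℝ} (hx₂ : √(∑ i, x i ^ 2) ≤ 1) (hx₁ : ∑ i, |x i| ≤ √k) :
    x ∈ (1 + √(k / (k + 1))) • convexHull ℝ (sparseBall ι k) := by
  have hx : ∀ i, |x i| ≤ 1 := fun i => (sq_le_one_iff_abs_le_one _).1 <|
    (single_le_sum (fun j _ => sq_nonneg (x j)) (mem_univ i)).trans (Real.sqrt_le_one.1 hx₂)
  obtain ⟨y, z, μ, hxyz, hy₀, hyx, hzμ, hμy, hμz, hsum⟩ :=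
    exists_head_tail_decomposition x hk hkι
  set t := max μ ((∑ i, |z i|) / k)
  have hb₁ : √(∑ i, y i ^ 2) ≤ 1 :=
    (Real.sqrt_le_sqrt (sum_le_sum fun i _ => sq_le_sq.2 (hyx i))).trans hx₂
  have hbℓ : √(∑ i, y i ^ 2) ^ 2 ≤ ∑ i, |y i| := by
    rw [Real.sq_sqrt (by positivity)]
    refine sum_le_sum fun i _ => ?_
    rw [← sq_abs]
    exact pow_le_of_le_one (abs_nonneg _) ((hyx i).trans (hx i)) two_ne_zero
  have hy : y ∈ √(∑ i, y i ^ 2) • convexHull ℝ (sparseBall ι k) :=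
    Set.smul_set_mono (subset_convexHull ℝ _) (mem_smul_sparseBall le_rfl hy₀)
  have hz : z ∈ (√k * t) • convexHull ℝ (sparseBall ι k) :=
    mem_smul_convexHull_sparseBall_of_abs_le (fun i => (hzμ i).trans (le_max_left _ _))
      ((div_le_iff₀' (by positivity)).1 (le_max_right _ _))
  have hρ := add_sqrt_mul_max_le (by exact_mod_cast hk) hb₁ hbℓ hμy hμz (hsum.trans_le hx₁)
  have hc : 0 ≤ √k * t := mul_nonneg (Real.sqrt_nonneg _) (le_max_of_le_right (by positivity))
  have hmem := (convex_convexHull ℝ (sparseBall ι k)).add_smul (Real.sqrt_nonneg _) hc ▸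
    Set.add_mem_add hy hz
  refine balanced_sparseBall.convexHull.smul_mono ?_ (hxyz ▸ hmem)
  rwa [Real.norm_of_nonneg (add_nonneg (Real.sqrt_nonneg _) hc),
    Real.norm_of_nonneg (by positivity)]

end

theorem stmt3 (n k : ℕ) (hk1 : 1 ≤ k) (hkn : k ≤ n) :
    {x : Fin n → ℝ | Real.sqrt (∑ i, x i ^ 2) ≤ 1 ∧ (∑ i, |x i|) ≤ Real.sqrt k} ⊆
    (1 + Real.sqrt ((k : ℝ) / (k + 1))) •
      convexHull ℝ {x : Fin n → ℝ | Real.sqrt (∑ i, x i ^ 2) ≤ 1 ∧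
        (Finset.univ.filter fun i => x i ≠ 0).card ≤ k} :=
  fun _ hx => mem_smul_convexHull_sparseBall hk1 (by simpa using hkn) hx.1 hx.2
end

section
/- Let x ∈ R^n with nonincreasing nonnegative entries x_1 ≥ x_2 ≥ ... ≥ x_n ≥ 0 and let k divide into blocks: I^1 = {1,...,k}, I^2 = {k+1,...,2k}, etc. If ||x||_2 ≤ 1 and ||x||_1 ≤ √k, then the sum of the Euclidean norms of the blocks, Σ_j ||x_{I^j}||_2, is at most 1 + √(k/(k+1)). -/
/-!
Write `s j` for the ℓ¹-norm of the `j`-th block. Since `x` is nonincreasing, every entry of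
block `j + 1` is at most `s j / k`, so `k ‖x_{I^{j+1}}‖₂² ≤ s j * s (j + 1)` and, by AM–GM,
`2 √k ‖x_{I^{j+1}}‖₂ ≤ s j + s (j + 1)`. Summing and using `∑ s j ≤ √k` bounds the norms of all
blocks but the first by `1 - s 0 / (2 √k)`, while the first has norm at most `min 1 (s 0)`.
So the sum is at most `2 - 1 / (2 √k)`, and `2 √k ≤ k + 1` gives
`2 - 1 / (2 √k) ≤ 1 + k / (k + 1) ≤ 1 + √(k / (k + 1))`.
-/

open Finset

lemma sum_le_two_sub_inv_of_mul_le_add {b s : ℕ → ℝ} {r : ℝ} (hr : 1 ≤ 2 * r)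
    (hs : ∀ j, 0 ≤ s j) (hb₀ : b 0 ≤ 1) (hb₀s : b 0 ≤ s 0)
    (hb : ∀ j, 2 * r * b (j + 1) ≤ s j + s (j + 1)) (J : ℕ) (hS : ∑ j ∈ range J, s j ≤ r) :
    ∑ j ∈ range J, b j ≤ 2 - 1 / (2 * r) := by
  have hr₀ : 0 < 2 * r := by linarith
  have hr_ne : r ≠ 0 := by linarith
  cases J with
  | zero =>
    have : 1 / (2 * r) ≤ 1 := (div_le_one hr₀).mpr hr
    rw [range_zero, sum_empty]
    linarith
  | succ J =>
    have h_shift : ∑ j ∈ range J, s j + s J = ∑ j ∈ range J, s (j + 1) + s 0 := by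
      rw [← sum_range_succ, ← sum_range_succ']
    have h_tail : 2 * r * ∑ j ∈ range J, b (j + 1) ≤ 2 * r - s 0 := by
      calc 2 * r * ∑ j ∈ range J, b (j + 1)
          ≤ ∑ j ∈ range J, (s j + s (j + 1)) := by rw [mul_sum]; exact sum_le_sum fun j _ ↦ hb j
        _ = ∑ j ∈ range J, s j + ∑ j ∈ range J, s (j + 1) := sum_add_distrib
        _ ≤ 2 * r - s 0 := by rw [sum_range_succ] at hS; linarith [hs J]
    have h_weighted : (2 * r - 1) * b 0 ≤ 2 * r - 1 := by nlinarith
    calc ∑ j ∈ range (J + 1), b j = 2 * r * (∑ j ∈ range J, b (j + 1) + b 0) / (2 * r) := by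
          rw [sum_range_succ', mul_div_cancel_left₀ _ hr₀.ne']
      _ ≤ (2 * r * 2 - 1) / (2 * r) := by gcongr; linarith
      _ = 2 - 1 / (2 * r) := by field_simp

lemma two_sub_inv_two_sqrt_le {k : ℝ} (hk : 0 < k) :
    2 - 1 / (2 * √k) ≤ 1 + √(k / (k + 1)) := by
  have h_le_sqrt : k / (k + 1) ≤ √(k / (k + 1)) :=
    Real.le_sqrt_self_iff.mpr (div_le_one_of_le₀ (by linarith) (by linarith))
  have h_amgm : 2 * √k ≤ k + 1 := by nlinarith [Real.sq_sqrt hk.le, sq_nonneg (√k - 1)]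
  have : 1 / (k + 1) ≤ 1 / (2 * √k) := one_div_le_one_div_of_le (by positivity) h_amgm
  have : k / (k + 1) = 1 - 1 / (k + 1) := by field_simp; ring
  linarith

lemma two_mul_sqrt_mul_sqrt_le_add {a q s t : ℝ} (ha : 0 ≤ a) (hs : 0 ≤ s) (ht : 0 ≤ t)
    (h : a * q ≤ s * t) : 2 * √a * √q ≤ s + t := by
  rcases le_or_gt q 0 with hq | hq
  · rw [Real.sqrt_eq_zero'.mpr hq]; linarith
  have := Real.sq_sqrt ha
  have := Real.sq_sqrt hq.le
  nlinarith [sq_nonneg (s - t), Real.sqrt_nonneg a, Real.sqrt_nonneg q]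

lemma sum_range_mul_eq_sum_sum_Ico (y : ℕ → ℝ) (k J : ℕ) :
    ∑ j ∈ range J, ∑ m ∈ Ico (k * j) (k * (j + 1)), y m = ∑ m ∈ range (k * J), y m := by
  induction J with
  | zero => simp
  | succ J ih =>
    rw [sum_range_succ, ih, range_eq_Ico, range_eq_Ico,
      sum_Ico_consecutive _ (Nat.zero_le _) (Nat.mul_le_mul_left k J.le_succ)]

section Blocks

variable {y : ℕ → ℝ}

lemma mul_le_sum_Ico_of_antitone (hy : Antitone y) (k j : ℕ) {m : ℕ} (hm : k * (j + 1) ≤ m) :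
    k * y m ≤ ∑ t ∈ Ico (k * j) (k * (j + 1)), y t := by
  calc k * y m = ∑ _t ∈ Ico (k * j) (k * (j + 1)), y m := by
        rw [sum_const, Nat.card_Ico, ← Nat.mul_sub, Nat.add_sub_cancel_left, mul_one, nsmul_eq_mul]
    _ ≤ ∑ t ∈ Ico (k * j) (k * (j + 1)), y t :=
        sum_le_sum fun t ht ↦ hy ((mem_Ico.mp ht).2.le.trans hm)

lemma mul_sum_sq_Ico_succ_le (hy : Antitone y) (hnn : ∀ m, 0 ≤ y m) (k j : ℕ) :
    k * ∑ m ∈ Ico (k * (j + 1)) (k * (j + 1 + 1)), y m ^ 2 ≤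
      (∑ m ∈ Ico (k * j) (k * (j + 1)), y m) * ∑ m ∈ Ico (k * (j + 1)) (k * (j + 1 + 1)), y m := by
  rw [mul_sum, mul_sum]
  refine sum_le_sum fun m hm ↦ ?_
  rw [sq, ← mul_assoc]
  exact mul_le_mul_of_nonneg_right (mul_le_sum_Ico_of_antitone hy k j (mem_Ico.mp hm).1) (hnn m)

end Blocks

theorem sum_sqrt_sum_sq_Ico_le {y : ℕ → ℝ} (hy : Antitone y) (hnn : ∀ m, 0 ≤ y m) {k : ℕ}
    (hk : 0 < k) (J : ℕ) (h2 : ∑ m ∈ range k, y m ^ 2 ≤ 1)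
    (h1 : ∑ m ∈ range (k * J), y m ≤ √k) :
    ∑ j ∈ range J, √(∑ m ∈ Ico (k * j) (k * (j + 1)), y m ^ 2) ≤ 2 - 1 / (2 * √k) := by
  have h_sqrt_k : 1 ≤ √(k : ℝ) := Real.one_le_sqrt.mpr (by exact_mod_cast hk)
  refine sum_le_two_sub_inv_of_mul_le_add (s := fun j ↦ ∑ m ∈ Ico (k * j) (k * (j + 1)), y m)
    (by linarith) (fun j ↦ sum_nonneg fun m _ ↦ hnn m) ?_ ?_ (fun j ↦ ?_) J
    (by rwa [sum_range_mul_eq_sum_sum_Ico])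
  · simpa [← range_eq_Ico] using h2
  · exact (Real.sqrt_le_left (sum_nonneg fun m _ ↦ hnn m)).mpr
      (sum_sq_le_sq_sum_of_nonneg fun m _ ↦ hnn m)
  · exact two_mul_sqrt_mul_sqrt_le_add k.cast_nonneg (sum_nonneg fun m _ ↦ hnn m)
      (sum_nonneg fun m _ ↦ hnn m) (mul_sum_sq_Ico_succ_le hy hnn k j)

lemma sum_eq_sum_filter_fin {β : Type*} [AddCommMonoid β] {n : ℕ} {g : ℕ → β}
    (hg : ∀ m, n ≤ m → g m = 0) (s : Finset ℕ) :
    ∑ m ∈ s, g m = ∑ i ∈ univ.filter (fun i : Fin n ↦ (i : ℕ) ∈ s), g i := by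
  rw [← sum_filter_of_ne (p := (· < n)) fun m _ hm ↦ not_le.mp (mt (hg m) hm)]
  symm
  refine sum_nbij Fin.val (fun i hi ↦ ?_) Fin.val_injective.injOn (fun m hm ↦ ?_) fun _ _ ↦ rfl
  · simpa using hi
  · obtain ⟨hs, hn⟩ := mem_filter.mp hm
    exact ⟨⟨m, hn⟩, by simpa using hs, rfl⟩

def extendByZero {α : Type*} [Zero α] {n : ℕ} (x : Fin n → α) (m : ℕ) : α :=
  if h : m < n then x ⟨m, h⟩ else 0

section ExtendByZero

variable {α : Type*} {n : ℕ}

@[simp]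
lemma extendByZero_val [Zero α] (x : Fin n → α) (i : Fin n) : extendByZero x i = x i := by
  simp [extendByZero]

lemma extendByZero_of_le [Zero α] (x : Fin n → α) (m : ℕ) (hm : n ≤ m) :
    extendByZero x m = 0 := by
  simp [extendByZero, hm]

lemma extendByZero_nonneg [Zero α] [Preorder α] {x : Fin n → α} (hx : ∀ i, 0 ≤ x i) (m : ℕ) :
    0 ≤ extendByZero x m := by
  unfold extendByZero; split_ifs <;> simp [hx]

lemma antitone_extendByZero [Zero α] [Preorder α] {x : Fin n → α} (hx : Antitone x)
    (hnn : ∀ i, 0 ≤ x i) : Antitone (extendByZero x) := by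
  intro a b hab
  by_cases hb : b < n
  · have ha : a < n := hab.trans_lt hb
    simpa [extendByZero, ha, hb] using hx (show (⟨a, ha⟩ : Fin n) ≤ ⟨b, hb⟩ from hab)
  · rw [extendByZero_of_le x b (not_lt.mp hb)]
    exact extendByZero_nonneg hnn a

lemma sum_comp_extendByZero {β : Type*} [Zero α] [AddCommMonoid β] (x : Fin n → α) {g : α → β}
    (hg : g 0 = 0) (s : Finset ℕ) :
    ∑ m ∈ s, g (extendByZero x m) = ∑ i ∈ univ.filter (fun i : Fin n ↦ (i : ℕ) ∈ s), g (x i) := by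
  rw [sum_eq_sum_filter_fin fun m hm ↦ by rw [extendByZero_of_le x m hm, hg]]
  simp only [extendByZero_val]

end ExtendByZero

theorem stmt4_general (n k : ℕ) (x : Fin n → ℝ)
    (hmono : ∀ i j : Fin n, i ≤ j → x j ≤ x i) (hnn : ∀ i, 0 ≤ x i)
    (h2 : Real.sqrt (∑ i, x i ^ 2) ≤ 1) (h1 : (∑ i, |x i|) ≤ Real.sqrt k) :
    ∑ j ∈ Finset.range ((n + k - 1) / k),
      Real.sqrt (∑ i ∈ Finset.univ.filter
        (fun i : Fin n => k * j ≤ (i : ℕ) ∧ (i : ℕ) < k * (j + 1)), x i ^ 2)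
      ≤ 1 + Real.sqrt ((k : ℝ) / (k + 1)) := by
  obtain rfl | hk := Nat.eq_zero_or_pos k
  · simp
  have h_sq := sum_comp_extendByZero x (g := (· ^ 2 : ℝ → ℝ)) (zero_pow two_ne_zero)
  calc _ = ∑ j ∈ range ((n + k - 1) / k),
        √(∑ m ∈ Ico (k * j) (k * (j + 1)), extendByZero x m ^ 2) := by simp only [h_sq, mem_Ico]
    _ ≤ 2 - 1 / (2 * √k) := by
        refine sum_sqrt_sum_sq_Ico_le (antitone_extendByZero hmono hnn) (extendByZero_nonneg hnn)
          hk _ ?_ ?_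
        · rw [h_sq]
          exact (sum_le_univ_sum_of_nonneg fun i ↦ sq_nonneg _).trans (Real.sqrt_le_one.mp h2)
        · refine (sum_comp_extendByZero x (g := id) rfl _).trans_le ?_
          refine (sum_le_univ_sum_of_nonneg hnn).trans (le_of_eq_of_le ?_ h1)
          exact sum_congr rfl fun i _ ↦ (abs_of_nonneg (hnn i)).symm
    _ ≤ 1 + √(k / (k + 1)) := two_sub_inv_two_sqrt_le (by positivity)

theorem stmt4 (n k : ℕ) (hk : 0 < k) (x : Fin n → ℝ)
    (hmono : ∀ i j : Fin n, i ≤ j → x j ≤ x i) (hnn : ∀ i, 0 ≤ x i)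
    (h2 : Real.sqrt (∑ i, x i ^ 2) ≤ 1) (h1 : (∑ i, |x i|) ≤ Real.sqrt k) :
    ∑ j ∈ Finset.range ((n + k - 1) / k),
      Real.sqrt (∑ i ∈ Finset.univ.filter
        (fun i : Fin n => k * j ≤ (i : ℕ) ∧ (i : ℕ) < k * (j + 1)), x i ^ 2)
      ≤ 1 + Real.sqrt ((k : ℝ) / (k + 1)) :=
  stmt4_general n k x hmono hnn h2 h1
end

section
/- Let x ∈ R^n and let i_1, ..., i_n order the coordinates so |x_{i_1}| ≥ ... ≥ |x_{i_n}|. Define v by v_{i_j} = |x_{i_j}| for j ≤ k and v_{i_j} = |x_{i_k}| for j > k, and set b = ||(v_{i_1},...,v_{i_k})||_2. Then for every y ∈ R^n with ||y||_2 ≤ 1 and ||y||_0 ≤ k, one has vᵀy ≤ b. -/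
open scoped Classical

/-!
On the support `S` of `y`, Cauchy–Schwarz gives `vᵀy ≤ ‖v|_S‖₂ ‖y‖₂ ≤ ‖v|_S‖₂`. Since `v ∘ σ` is
nonnegative and antitone, its sum of squares over any at most `k` positions is at most its sum over
the first `k` positions, which is `b²`.
-/

open Finset

namespace Finset

variable {ι M : Type*} [AddCommMonoid M] [LinearOrder M]

/-- Compare both sums with `#s • c` and `#t • c` for `c` the minimum of `f` on `t`. -/
lemma sum_le_sum_of_card_le_of_forall_le [IsOrderedAddMonoid M] {s t : Finset ι} {f : ι → M}
    (hst : #s ≤ #t) (hf : ∀ j ∈ t, 0 ≤ f j) (hle : ∀ i ∈ s, ∀ j ∈ t, f i ≤ f j) :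
    ∑ i ∈ s, f i ≤ ∑ j ∈ t, f j := by
  rcases t.eq_empty_or_nonempty with rfl | ht
  · rw [card_empty, Nat.le_zero, card_eq_zero] at hst
    simp [hst]
  calc ∑ i ∈ s, f i ≤ #s • t.inf' ht f :=
        sum_le_card_nsmul _ _ _ fun i hi ↦ le_inf' _ _ (hle i hi)
    _ ≤ #t • t.inf' ht f := nsmul_le_nsmul_left (le_inf' _ _ hf) hst
    _ ≤ ∑ j ∈ t, f j := card_nsmul_le_sum _ _ _ fun j hj ↦ inf'_le _ hj

/-- Exchange argument: every index of `s \ t` lies above every index of `t \ s`. -/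
lemma _root_.Antitone.sum_le_sum_of_isLowerSet [LinearOrder ι] [IsOrderedCancelAddMonoid M]
    {f : ι → M} (hf : Antitone f) {s t : Finset ι} (ht : IsLowerSet (t : Set ι))
    (hf0 : ∀ j ∈ t, 0 ≤ f j) (hst : #s ≤ #t) :
    ∑ i ∈ s, f i ≤ ∑ j ∈ t, f j := by
  rw [← sum_sdiff_le_sum_sdiff]
  refine sum_le_sum_of_card_le_of_forall_le (card_sdiff_le_card_sdiff_iff.2 hst)
    (fun j hj ↦ hf0 j (mem_sdiff.1 hj).1) fun i hi j hj ↦ hf ?_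
  rw [mem_sdiff] at hi hj
  exact le_of_not_ge fun hij ↦ hi.2 (ht hij hj.1)

end Finset

lemma Real.sum_mul_le_sqrt_mul_sqrt_of_support_subset {ι : Type*} [Fintype ι] (s : Finset ι)
    (v y : ι → ℝ) (hy : ∀ i ∉ s, y i = 0) :
    ∑ i, v i * y i ≤ √(∑ i ∈ s, v i ^ 2) * √(∑ i, y i ^ 2) := by
  rw [← sum_subset (subset_univ s) fun i _ hi ↦ by rw [hy i hi, mul_zero]]
  exact (sum_mul_le_sqrt_mul_sqrt s v y).trans <| mul_le_mul_of_nonneg_left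
    (Real.sqrt_le_sqrt (sum_le_univ_sum_of_nonneg fun i ↦ sq_nonneg (y i))) (Real.sqrt_nonneg _)

theorem stmt10 (n k : ℕ) (hk : 1 ≤ k) (hkn : k ≤ n)
    (x : Fin n → ℝ) (σ : Equiv.Perm (Fin n))
    (hsort : ∀ a b : Fin n, a ≤ b → |x (σ b)| ≤ |x (σ a)|)
    (v : Fin n → ℝ)
    (hv : ∀ j : Fin n, v (σ j) =
      if (j : ℕ) < k then |x (σ j)| else |x (σ ⟨k - 1, by omega⟩)|)
    (b : ℝ)
    (hb : b = Real.sqrt (∑ j ∈ Finset.univ.filter (fun j : Fin n => (j : ℕ) < k), v (σ j) ^ 2))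
    (y : Fin n → ℝ) (hy2 : Real.sqrt (∑ i, y i ^ 2) ≤ 1)
    (hy0 : (Finset.univ.filter fun i => y i ≠ 0).card ≤ k) :
    (∑ i, v i * y i) ≤ b := by
  set S := univ.filter fun i ↦ y i ≠ 0
  set w : Fin n → ℝ := v ∘ σ
  have hw_nonneg (j : Fin n) : 0 ≤ w j := by
    simp only [w, Function.comp_apply, hv j]
    split <;> exact abs_nonneg _
  have hw_anti : Antitone w := by
    intro a c hac
    simp only [w, Function.comp_apply, hv]
    rw [Fin.le_def] at hac
    split_ifs with hc ha ha
    · exact hsort a c (Fin.le_def.2 hac)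
    · omega
    · exact hsort a _ (Fin.le_def.2 (by simp; omega))
    · exact le_rfl
  have hvS : ∑ i ∈ S, v i ^ 2 ≤ ∑ j ∈ univ.filter (fun j : Fin n ↦ (j : ℕ) < k), w j ^ 2 := by
    rw [show ∑ i ∈ S, v i ^ 2 = ∑ j ∈ S.map σ.symm.toEmbedding, w j ^ 2 by simp [w]]
    refine Antitone.sum_le_sum_of_isLowerSet
      (fun a c hac ↦ pow_le_pow_left₀ (hw_nonneg c) (hw_anti hac) 2)
      (fun a c hca hc ↦ by simp_all; omega) (fun j _ ↦ sq_nonneg _) ?_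
    rw [card_map, Fin.card_filter_val_lt, min_eq_right hkn]
    exact hy0
  calc ∑ i, v i * y i ≤ √(∑ i ∈ S, v i ^ 2) * √(∑ i, y i ^ 2) :=
        Real.sum_mul_le_sqrt_mul_sqrt_of_support_subset S v y fun i hi ↦ by simpa [S] using hi
    _ ≤ b * 1 :=
        mul_le_mul (hb ▸ Real.sqrt_le_sqrt hvS) hy2 (Real.sqrt_nonneg _) (hb ▸ Real.sqrt_nonneg _)
    _ = b := mul_one b
end
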